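/- arXiv:2305.06872 — 3 statements merged into one kernel-verified Lean document; each statement's English description precedes it below -/
import Mathlib

section
/- The function ψ̃(y) := y⁴/12 − y²/2 + log(cosh y) is nonnegative on ℝ, with ψ̃(y) = 0 if and only if y = 0. -/
/-!
Since ψ̃ is even with ψ̃(0) = 0, it suffices that ψ̃ is strictly increasing on [0, ∞), i.e. that
ψ̃'(y) = y³/3 - y + tanh y > 0 for y > 0. Cleared of denominators this is
(y - y³/3) cosh y < sinh y; the difference of the two sides vanishes at 0 and has derivative
y (y cosh y - sinh y) + (y³/3) sinh y, which is positive because tanh y < y.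
-/

open Real Set

lemma apply_lt_apply_of_hasDerivAt_pos {f f' : ℝ → ℝ} {a y : ℝ}
    (hf : ∀ x, HasDerivAt f (f' x) x) (hf' : ∀ x, a < x → 0 < f' x) (hy : a < y) :
    f a < f y := by
  have hmono : StrictMonoOn f (Ici a) :=
    strictMonoOn_of_hasDerivWithinAt_pos (convex_Ici a)
      (fun x _ ↦ (hf x).continuousAt.continuousWithinAt) (fun x _ ↦ (hf x).hasDerivWithinAt)
      (fun x hx ↦ hf' x (by rwa [interior_Ici] at hx))
  exact hmono self_mem_Ici hy.le hy

namespace Real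

lemma sinh_lt_mul_cosh {y : ℝ} (hy : 0 < y) : sinh y < y * cosh y := by
  have hderiv (x : ℝ) : HasDerivAt (fun x ↦ x * cosh x - sinh x) (x * sinh x) x := by
    refine (((hasDerivAt_id' x).fun_mul (hasDerivAt_cosh x)).fun_sub
      (hasDerivAt_sinh x)).congr_deriv ?_
    ring
  have := apply_lt_apply_of_hasDerivAt_pos hderiv
    (fun x hx ↦ mul_pos hx (sinh_pos_iff.mpr hx)) hy
  simpa using this

lemma sub_cube_div_three_mul_cosh_lt_sinh {y : ℝ} (hy : 0 < y) :
    (y - y ^ 3 / 3) * cosh y < sinh y := by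
  have hderiv (x : ℝ) : HasDerivAt (fun x ↦ sinh x - (x - x ^ 3 / 3) * cosh x)
      (x * (x * cosh x - sinh x) + x ^ 3 / 3 * sinh x) x := by
    refine ((hasDerivAt_sinh x).fun_sub (((hasDerivAt_id' x).fun_sub
      ((hasDerivAt_pow 3 x).div_const 3)).fun_mul (hasDerivAt_cosh x))).congr_deriv ?_
    ring
  have hpos (x : ℝ) (hx : 0 < x) : 0 < x * (x * cosh x - sinh x) + x ^ 3 / 3 * sinh x := by
    have := sub_pos.mpr (sinh_lt_mul_cosh hx)
    have := sinh_pos_iff.mpr hx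
    positivity
  have := apply_lt_apply_of_hasDerivAt_pos hderiv hpos hy
  simpa using this

end Real

noncomputable def psiTilde (y : ℝ) : ℝ := y ^ 4 / 12 - y ^ 2 / 2 + log (cosh y)

lemma psiTilde_zero : psiTilde 0 = 0 := by simp [psiTilde]

lemma psiTilde_neg (y : ℝ) : psiTilde (-y) = psiTilde y := by
  simp only [psiTilde, cosh_neg, even_two.neg_pow, (by decide : Even 4).neg_pow]

lemma hasDerivAt_psiTilde (y : ℝ) :
    HasDerivAt psiTilde (y ^ 3 / 3 - y + sinh y / cosh y) y := by
  refine ((((hasDerivAt_pow 4 y).div_const 12).fun_sub ((hasDerivAt_pow 2 y).div_const 2)).fun_add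
    ((hasDerivAt_cosh y).log (cosh_pos y).ne')).congr_deriv ?_
  ring

lemma psiTilde_pos_of_pos {y : ℝ} (hy : 0 < y) : 0 < psiTilde y := by
  have hderiv_pos (x : ℝ) (hx : 0 < x) : 0 < x ^ 3 / 3 - x + sinh x / cosh x := by
    have := (lt_div_iff₀ (cosh_pos x)).mpr (sub_cube_div_three_mul_cosh_lt_sinh hx)
    linarith
  simpa [psiTilde_zero] using apply_lt_apply_of_hasDerivAt_pos hasDerivAt_psiTilde hderiv_pos hy

lemma psiTilde_pos {y : ℝ} (hy : y ≠ 0) : 0 < psiTilde y := by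
  rcases hy.lt_or_gt with hneg | hpos
  · simpa [psiTilde_neg] using psiTilde_pos_of_pos (neg_pos.mpr hneg)
  · exact psiTilde_pos_of_pos hpos

theorem psiTilde_nonneg_and_eq_zero_iff (ψ : ℝ → ℝ)
    (hψ : ∀ y, ψ y = y ^ 4 / 12 - y ^ 2 / 2 + Real.log (Real.cosh y)) :
    (∀ y, 0 ≤ ψ y) ∧ (∀ y, ψ y = 0 ↔ y = 0) := by
  obtain rfl : ψ = psiTilde := funext hψ
  refine ⟨fun y ↦ ?_, fun y ↦ ⟨fun h ↦ ?_, fun h ↦ h ▸ psiTilde_zero⟩⟩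
  · rcases eq_or_ne y 0 with rfl | hy
    · exact psiTilde_zero.ge
    · exact (psiTilde_pos hy).le
  · by_contra hy
    exact (psiTilde_pos hy).ne' h
end

section
/- Let β > 1 and define φ_β(u) := u²/(2β) − log(cosh u). Then a point u > 0 is a critical point of φ_β on (0,∞) if and only if tanh(u) = u/β, and at this unique positive critical point x_β one has φ_β''(x_β) > 0 and x_β is the global minimum of φ_β on [0,∞). -/
/-!
With `r u = u / tanh u`, one has `φ_β' u = u / β - tanh u = (tanh u / β) (r u - β)`.
The function `r` is strictly increasing on `(0, ∞)` because `sinh u cosh u > u`, so `r u = β`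
has at most one positive solution `x`, `φ_β'` is nonpositive on `(0, x)` and nonnegative on
`(x, ∞)`, and at `x` the product rule gives `φ_β'' x = (tanh x / β) r' x > 0`.
-/

open Real Set

namespace Real

lemma tanh_pos {u : ℝ} (hu : 0 < u) : 0 < tanh u := by
  rw [tanh_eq_sinh_div_cosh]
  exact div_pos (sinh_pos_iff.mpr hu) (cosh_pos u)

lemma self_lt_sinh_mul_cosh {u : ℝ} (hu : 0 < u) : u < sinh u * cosh u :=
  (self_lt_sinh_iff.mpr hu).trans_le
    (le_mul_of_one_le_right (sinh_pos_iff.mpr hu).le (one_le_cosh u))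

lemma hasDerivAt_log_cosh (u : ℝ) : HasDerivAt (fun u => log (cosh u)) (tanh u) u := by
  rw [tanh_eq_sinh_div_cosh]
  exact (hasDerivAt_cosh u).log (cosh_pos u).ne'

lemma hasDerivAt_tanh (u : ℝ) : HasDerivAt tanh (1 / cosh u ^ 2) u := by
  have h := (hasDerivAt_sinh u).div (hasDerivAt_cosh u) (cosh_pos u).ne'
  refine (h.congr_deriv ?_).congr_of_eventuallyEq (.of_forall tanh_eq_sinh_div_cosh)
  rw [← cosh_sq_sub_sinh_sq u]
  ring

lemma hasDerivAt_div_tanh {u : ℝ} (hu : tanh u ≠ 0) :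
    HasDerivAt (fun u => u / tanh u) ((tanh u - u / cosh u ^ 2) / tanh u ^ 2) u := by
  exact ((hasDerivAt_id u).div (hasDerivAt_tanh u) hu).congr_deriv (by simp only [id]; ring)

lemma tanh_sub_div_cosh_sq_pos {u : ℝ} (hu : 0 < u) : 0 < tanh u - u / cosh u ^ 2 := by
  have hcosh := (cosh_pos u).ne'
  have h : tanh u - u / cosh u ^ 2 = (sinh u * cosh u - u) / cosh u ^ 2 := by
    rw [tanh_eq_sinh_div_cosh]
    field_simp
  rw [h]
  exact div_pos (sub_pos.mpr (self_lt_sinh_mul_cosh hu)) (by positivity)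

lemma strictMonoOn_div_tanh : StrictMonoOn (fun u => u / tanh u) (Ioi 0) := by
  have hderiv (u : ℝ) (hu : u ∈ Ioi 0) :=
    hasDerivAt_div_tanh (tanh_pos (show 0 < u from hu)).ne'
  refine strictMonoOn_of_hasDerivWithinAt_pos (convex_Ioi 0)
    (f' := fun u => (tanh u - u / cosh u ^ 2) / tanh u ^ 2)
    (fun u hu => (hderiv u hu).continuousAt.continuousWithinAt) ?_ ?_ <;> rw [interior_Ioi]
  · exact fun u hu => (hderiv u hu).hasDerivWithinAt
  · exact fun u hu => div_pos (tanh_sub_div_cosh_sq_pos hu) (pow_pos (tanh_pos hu) 2)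

end Real

lemma isMinOn_of_hasDerivAt_sign {f f' : ℝ → ℝ} {a x : ℝ}
    (hf : ∀ u, HasDerivAt f (f' u) u) (hax : a ≤ x) (hleft : ∀ u ∈ Ioo a x, f' u ≤ 0)
    (hright : ∀ u ∈ Ioi x, 0 ≤ f' u) :
    IsMinOn f (Ici a) x := by
  have hcont : Continuous f := continuous_iff_continuousAt.2 fun u => (hf u).continuousAt
  refine isMinOn_iff.2 fun u hu => ?_
  rcases le_total u x with hux | hxu
  · have hanti : AntitoneOn f (Icc a x) :=
      antitoneOn_of_hasDerivWithinAt_nonpos (convex_Icc a x) hcont.continuousOn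
        (fun u _ => (hf u).hasDerivWithinAt) (by rwa [interior_Icc])
    exact hanti ⟨hu, hux⟩ ⟨hax, le_rfl⟩ hux
  · have hmono : MonotoneOn f (Ici x) :=
      monotoneOn_of_hasDerivWithinAt_nonneg (convex_Ici x) hcont.continuousOn
        (fun u _ => (hf u).hasDerivWithinAt) (by rwa [interior_Ici])
    exact hmono self_mem_Ici hxu hxu

noncomputable def phiBeta (β u : ℝ) : ℝ := u ^ 2 / (2 * β) - log (cosh u)

lemma hasDerivAt_phiBeta (β u : ℝ) : HasDerivAt (phiBeta β) (u / β - tanh u) u := by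
  have hsq : HasDerivAt (fun u : ℝ => u ^ 2 / (2 * β)) (u / β) u := by
    refine ((hasDerivAt_pow 2 u).div_const (2 * β)).congr_deriv ?_
    norm_num
    ring
  exact hsq.sub (hasDerivAt_log_cosh u)

lemma deriv_phiBeta (β : ℝ) : deriv (phiBeta β) = fun u => u / β - tanh u :=
  funext fun u => (hasDerivAt_phiBeta β u).deriv

section phiBeta

variable {β : ℝ}

lemma div_sub_tanh_eq_mul (hβ : β ≠ 0) (u : ℝ) :
    u / β - tanh u = tanh u / β * (u / tanh u - β) := by
  rcases eq_or_ne u 0 with rfl | hu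
  · simp
  · have htanh : tanh u ≠ 0 := by
      rw [tanh_eq_sinh_div_cosh]
      exact div_ne_zero (sinh_ne_zero.mpr hu) (cosh_pos u).ne'
    field_simp

lemma tanh_eq_div_iff_div_tanh_eq (hβ : β ≠ 0) {u : ℝ} (hu : 0 < u) :
    tanh u = u / β ↔ u / tanh u = β := by
  rw [eq_div_iff hβ, div_eq_iff (tanh_pos hu).ne']
  constructor <;> intro h <;> linarith

lemma deriv_deriv_phiBeta_pos (hβ : 0 < β) {x : ℝ} (hx : 0 < x) (hcrit : x / tanh x = β) :
    0 < deriv (deriv (phiBeta β)) x := by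
  have hprod : HasDerivAt (fun u => tanh u / β * (u / tanh u - β))
      (tanh x / β * ((tanh x - x / cosh x ^ 2) / tanh x ^ 2)) x := by
    refine (((hasDerivAt_tanh x).div_const β).mul
      ((hasDerivAt_div_tanh (tanh_pos hx).ne').sub_const β)).congr_deriv ?_
    rw [hcrit, sub_self, mul_zero, zero_add]
  rw [deriv_phiBeta, funext (div_sub_tanh_eq_mul hβ.ne'), hprod.deriv]
  exact mul_pos (div_pos (tanh_pos hx) hβ)
    (div_pos (tanh_sub_div_cosh_sq_pos hx) (pow_pos (tanh_pos hx) 2))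

end phiBeta

theorem phi_beta_critical_point (β : ℝ) (hβ : 1 < β) (φ : ℝ → ℝ)
    (hφ : ∀ u, φ u = u ^ 2 / (2 * β) - Real.log (Real.cosh u)) :
    (∀ u : ℝ, 0 < u → (deriv φ u = 0 ↔ Real.tanh u = u / β)) ∧
      ∀ x : ℝ, 0 < x → Real.tanh x = x / β →
        (∀ x' : ℝ, 0 < x' → Real.tanh x' = x' / β → x' = x) ∧
        0 < deriv (deriv φ) x ∧
        ∀ u ∈ Set.Ici (0 : ℝ), φ x ≤ φ u := by
  obtain rfl : φ = phiBeta β := funext hφ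
  have hβ0 : 0 < β := zero_lt_one.trans hβ
  refine ⟨fun u _ => ?_, fun x hx hcrit => ?_⟩
  · rw [deriv_phiBeta]
    exact sub_eq_zero.trans eq_comm
  rw [tanh_eq_div_iff_div_tanh_eq hβ0.ne' hx] at hcrit
  refine ⟨fun x' hx' hcrit' => ?_, deriv_deriv_phiBeta_pos hβ0 hx hcrit, ?_⟩
  · exact strictMonoOn_div_tanh.injOn hx' hx
      (((tanh_eq_div_iff_div_tanh_eq hβ0.ne' hx').1 hcrit').trans hcrit.symm)
  refine isMinOn_iff.1 (isMinOn_of_hasDerivAt_sign (hasDerivAt_phiBeta β) hx.le ?_ ?_)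
  · rintro u ⟨hu, hux⟩
    rw [div_sub_tanh_eq_mul hβ0.ne']
    exact mul_nonpos_of_nonneg_of_nonpos (div_pos (tanh_pos hu) hβ0).le
      (sub_nonpos.2 ((strictMonoOn_div_tanh hu hx hux).le.trans_eq hcrit))
  · intro u hxu
    rw [div_sub_tanh_eq_mul hβ0.ne']
    exact mul_nonneg (div_pos (tanh_pos (hx.trans hxu)) hβ0).le
      (sub_nonneg.2 (hcrit.symm.trans_le (strictMonoOn_div_tanh hx (hx.trans hxu) hxu).le))
end

section
/- For two centered Gaussian random variables G_p ∼ N(0, σ_p²) and G_q ∼ N(0, σ_q²) with σ_p, σ_q > 0, the Kolmogorov distance satisfies sup_{w∈ℝ} |P(G_p ≤ w) − P(G_q ≤ w)| ≤ |1 − σ_q²/σ_p²|. -/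
/-!
Write `Φ` for the standard normal CDF, so that the two CDFs at `w` are `Φ (c)` and `Φ (c / r)` with
`c = w / σp` and `r = σq / σp`. Since `|t| φ(t) ≤ 1/2`, the map `s ↦ Φ (c / s)`, whose derivative is
`-φ(c/s) (c/s) / s`, is `1`-Lipschitz on `[1/2, ∞)`; the mean value theorem then gives
`|Φ (c / r) - Φ c| ≤ |r - 1| ≤ |1 - r²|` for `r ≥ 1/2`. For `r < 1/2` the points `c` and `c / r` lie on
the same side of `0` and `Φ 0 = 1/2`, so the difference is at most `1/2 < 1 - r²`.
-/

open MeasureTheory ProbabilityTheory Real Set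
open scoped NNReal

local notation "Φ" => cdf (gaussianReal 0 1)

lemma cdf_gaussianReal_eq_integral (μ : ℝ) {v : ℝ≥0} (hv : v ≠ 0) (x : ℝ) :
    cdf (gaussianReal μ v) x = ∫ t in Iic x, gaussianPDFReal μ v t := by
  rw [cdf_eq_real, measureReal_def, gaussianReal_apply_eq_integral μ hv,
    ENNReal.toReal_ofReal (setIntegral_nonneg measurableSet_Iic
      fun t _ ↦ gaussianPDFReal_nonneg μ v t)]

lemma hasDerivAt_cdf_gaussianReal (μ : ℝ) {v : ℝ≥0} (hv : v ≠ 0) (x : ℝ) :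
    HasDerivAt (cdf (gaussianReal μ v)) (gaussianPDFReal μ v x) x := by
  have hint := integrable_gaussianPDFReal μ v
  have hcdf : ⇑(cdf (gaussianReal μ v)) =
      fun y ↦ cdf (gaussianReal μ v) 0 + ∫ t in (0 : ℝ)..y, gaussianPDFReal μ v t := by
    ext y
    rw [cdf_gaussianReal_eq_integral μ hv, cdf_gaussianReal_eq_integral μ hv,
      ← intervalIntegral.integral_Iic_sub_Iic hint.integrableOn hint.integrableOn]
    ring
  rw [hcdf]
  refine (intervalIntegral.integral_hasDerivAt_right hint.intervalIntegrable
    (stronglyMeasurable_gaussianPDFReal μ v).stronglyMeasurableAtFilter ?_).const_add _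
  unfold gaussianPDFReal
  fun_prop

lemma cdf_gaussianReal_zero {v : ℝ≥0} (hv : v ≠ 0) : cdf (gaussianReal 0 v) 0 = 1 / 2 := by
  have := nullSingletonClass_gaussianReal (μ := 0) hv
  set μ := gaussianReal 0 v
  have hsymm : μ.real (Iic 0) = μ.real (Ioi 0) := by
    have hmap : μ.map (fun x ↦ -x) = μ := by simpa using gaussianReal_map_neg (μ := 0) (v := v)
    conv_lhs => rw [← hmap]
    rw [map_measureReal_apply measurable_neg measurableSet_Iic, measureReal_congr Ioi_ae_eq_Ici]
    simp [Set.preimage, Ici]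
  have hcompl : μ.real (Iic 0) + μ.real (Ioi 0) = 1 := by
    rw [← compl_Iic, measureReal_add_measureReal_compl measurableSet_Iic, probReal_univ]
  rw [cdf_eq_real]
  linarith

lemma cdf_gaussianReal_sq_eq_cdf_div {σ : ℝ} (hσ : 0 < σ) (w : ℝ) :
    cdf (gaussianReal 0 (σ ^ 2).toNNReal) w = Φ (w / σ) := by
  have hmap : (gaussianReal 0 1).map (σ * ·) = gaussianReal 0 (σ ^ 2).toNNReal := by
    rw [gaussianReal_map_const_mul, mul_zero, mul_one]
    congr 1
    exact (Real.toNNReal_of_nonneg (sq_nonneg σ)).symm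
  rw [cdf_eq_real, cdf_eq_real, ← hmap,
    map_measureReal_apply (measurable_const_mul σ) measurableSet_Iic]
  congr
  ext x
  simp [mul_comm σ, le_div_iff₀ hσ]

lemma gaussianPDFReal_mul_abs_le (t : ℝ) : gaussianPDFReal 0 1 t * |t| ≤ 1 / 2 := by
  have hexp : |t| * rexp (-t ^ 2 / 2) ≤ 1 := by
    have : |t| ≤ t ^ 2 / 2 + 1 := by nlinarith [sq_abs t, sq_nonneg (|t| - 1)]
    rw [neg_div, Real.exp_neg, ← div_eq_mul_inv, div_le_one (exp_pos _)]
    linarith [add_one_le_exp (t ^ 2 / 2)]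
  have hsqrt : 2 ≤ √(2 * π) := by
    rw [Real.le_sqrt zero_le_two (by positivity)]
    nlinarith [pi_gt_three]
  simp only [gaussianPDFReal, NNReal.coe_one, mul_one, sub_zero]
  calc (√(2 * π))⁻¹ * rexp (-t ^ 2 / 2) * |t| = (√(2 * π))⁻¹ * (|t| * rexp (-t ^ 2 / 2)) := by
        ring
    _ ≤ 2⁻¹ * 1 := mul_le_mul (inv_anti₀ two_pos hsqrt) hexp (by positivity) (by norm_num)
    _ = 1 / 2 := by norm_num

lemma hasDerivAt_cdf_gaussianReal_div (c : ℝ) {s : ℝ} (hs : s ≠ 0) :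
    HasDerivAt (fun s ↦ Φ (c / s)) (-(gaussianPDFReal 0 1 (c / s) * (c / s)) / s) s := by
  refine ((hasDerivAt_cdf_gaussianReal 0 one_ne_zero (c / s)).comp s
    ((hasDerivAt_inv hs).const_mul c)).congr_deriv ?_
  field_simp

lemma abs_cdf_gaussianReal_div_sub_le (c : ℝ) {r : ℝ} (hr : 1 / 2 ≤ r) :
    |Φ (c / r) - Φ c| ≤ |r - 1| := by
  have hderiv : ∀ s ∈ Ici (1 / 2 : ℝ), |-(gaussianPDFReal 0 1 (c / s) * (c / s)) / s| ≤ 1 := by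
    intro s hs
    have hs0 : 0 < s := lt_of_lt_of_le (by norm_num) hs
    rw [abs_div, abs_neg, abs_mul, abs_of_nonneg (gaussianPDFReal_nonneg _ _ _), abs_of_pos hs0,
      div_le_one hs0]
    linarith [gaussianPDFReal_mul_abs_le (c / s), mem_Ici.1 hs]
  simpa using Convex.norm_image_sub_le_of_norm_hasDerivWithin_le
    (fun s hs ↦ (hasDerivAt_cdf_gaussianReal_div c
      (lt_of_lt_of_le (by norm_num) (mem_Ici.1 hs)).ne').hasDerivWithinAt)
    hderiv (convex_Ici _) (show (1 : ℝ) ∈ Ici (1 / 2) by norm_num) (mem_Ici.2 hr)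

lemma abs_cdf_gaussianReal_div_sub_le_half (c : ℝ) {r : ℝ} (hr : 0 < r) :
    |Φ (c / r) - Φ c| ≤ 1 / 2 := by
  have hΦ0 := cdf_gaussianReal_zero (one_ne_zero (α := ℝ≥0))
  rw [abs_le]
  rcases le_total 0 c with hc | hc
  · have := monotone_cdf (gaussianReal 0 1) hc
    have := monotone_cdf (gaussianReal 0 1) (div_nonneg hc hr.le)
    constructor <;> linarith [cdf_le_one (gaussianReal 0 1) c, cdf_le_one (gaussianReal 0 1) (c / r)]
  · have := monotone_cdf (gaussianReal 0 1) hc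
    have := monotone_cdf (gaussianReal 0 1) (div_nonpos_of_nonpos_of_nonneg hc hr.le)
    constructor <;> linarith [cdf_nonneg (gaussianReal 0 1) c, cdf_nonneg (gaussianReal 0 1) (c / r)]

lemma abs_cdf_gaussianReal_div_sub_le_abs_one_sub_sq (c : ℝ) {r : ℝ} (hr : 0 < r) :
    |Φ (c / r) - Φ c| ≤ |1 - r ^ 2| := by
  rcases le_or_gt (1 / 2) r with hr' | hr'
  · calc |Φ (c / r) - Φ c| ≤ |r - 1| := abs_cdf_gaussianReal_div_sub_le c hr'
      _ ≤ |r - 1| * |1 + r| :=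
        le_mul_of_one_le_right (abs_nonneg _) (by rw [abs_of_pos (by linarith)]; linarith)
      _ = |1 - r ^ 2| := by rw [← abs_mul, abs_sub_comm 1]; ring_nf
  · calc |Φ (c / r) - Φ c| ≤ 1 / 2 := abs_cdf_gaussianReal_div_sub_le_half c hr
      _ ≤ |1 - r ^ 2| := by rw [abs_of_pos (by nlinarith)]; nlinarith

theorem kolmogorov_dist_gaussians_le (σp σq : ℝ) (hσp : 0 < σp) (hσq : 0 < σq) :
    (⨆ w : ℝ,
        |((gaussianReal 0 (Real.toNNReal (σp ^ 2))) (Set.Iic w)).toReal -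
          ((gaussianReal 0 (Real.toNNReal (σq ^ 2))) (Set.Iic w)).toReal|) ≤
      |1 - σq ^ 2 / σp ^ 2| := by
  refine ciSup_le fun w ↦ ?_
  simp only [← measureReal_def, ← cdf_eq_real, cdf_gaussianReal_sq_eq_cdf_div hσp,
    cdf_gaussianReal_sq_eq_cdf_div hσq]
  have hw : w / σq = w / σp / (σq / σp) := by field_simp
  rw [abs_sub_comm, hw, ← div_pow]
  exact abs_cdf_gaussianReal_div_sub_le_abs_one_sub_sq _ (div_pos hσq hσp)
end
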